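/- arXiv:2507.18495 — 2 statements merged into one kernel-verified Lean document; each statement's English description precedes it below -/
import Mathlib

section
/- For positive reals l_i, l_j, l_k, one has (cosh l_k + cosh l_i · cosh l_j)² − sinh² l_i · sinh² l_j > 4. -/
theorem stmt_1 (li lj lk : ℝ) (hi : 0 < li) (hj : 0 < lj) (hk : 0 < lk) :
    4 < (Real.cosh lk + Real.cosh li * Real.cosh lj) ^ 2
      - Real.sinh li ^ 2 * Real.sinh lj ^ 2 := by
  have h1 : Real.cosh li ^ 2 = 1 + Real.sinh li ^ 2 := Real.cosh_sq' li
  have h2 : Real.cosh lj ^ 2 = 1 + Real.sinh lj ^ 2 := Real.cosh_sq' lj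
  have h3 : 1 < Real.cosh lk := by
    rw [← Real.cosh_zero]; exact Real.cosh_lt_cosh.2 (by simpa using hk.ne')
  have h4 : 1 ≤ Real.cosh li := Real.one_le_cosh li
  have h5 : 1 ≤ Real.cosh lj := Real.one_le_cosh lj
  nlinarith [sq_nonneg (Real.sinh li), sq_nonneg (Real.sinh lj), mul_le_mul h4 h5 zero_le_one (le_trans zero_le_one h4)]
end

section
/- Let U ⊆ ℝ^N be open convex and K : U → ℝ^N be C¹, injective, with symmetric negative definite Jacobian. Suppose a C¹ curve u : [0,∞) → U stays in a compact subset of U, and along it ℰ(u(t)) is non-increasing where ℰ is the strictly convex potential with ∇ℰ = −(K − K̄), and u solves u' = K(u) − K̄. If some K(ū) = K̄ with ū ∈ U, then there exists a sequence t_n → ∞ with K(u(t_n)) → K̄, and consequently u(t_n) → ū along a subsequence. -/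
open Real Set Filter

local notation "⟪" x ", " y "⟫" => @inner ℝ _ _ x y

/-- The mean-value-theorem argument of Theorem 3.5: if a solution of the
combinatorial Ricci flow stays in a compact subset of `U` and the strictly convex
potential `ℰ` (with `∇ℰ = −(K − K̄)`) is non-increasing along it, then there is a
sequence of times `t_n → ∞` with `K(u(t_n)) → K̄`, and along a subsequence
`u(t_n) → ū`, where `ū` is the (unique) point with `K(ū) = K̄`. -/
theorem stmt_18 {N : ℕ} (U : Set (EuclideanSpace ℝ (Fin N)))
    (hUo : IsOpen U) (hUc : Convex ℝ U)
    (K : EuclideanSpace ℝ (Fin N) → EuclideanSpace ℝ (Fin N))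
    (K' : EuclideanSpace ℝ (Fin N) →
      (EuclideanSpace ℝ (Fin N) →L[ℝ] EuclideanSpace ℝ (Fin N)))
    (hK : ∀ u ∈ U, HasFDerivAt K (K' u) u)
    (hK'cont : ContinuousOn K' U)
    (hKinj : Set.InjOn K U)
    (hsym : ∀ u ∈ U, ∀ v w, ⟪K' u v, w⟫ = ⟪v, K' u w⟫)
    (hneg : ∀ u ∈ U, ∀ v, v ≠ 0 → ⟪K' u v, v⟫ < 0)
    (Kb : EuclideanSpace ℝ (Fin N))
    (En : EuclideanSpace ℝ (Fin N) → ℝ)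
    (hEn : ∀ u ∈ U, HasGradientAt En (-(K u - Kb)) u)
    (hEnconv : StrictConvexOn ℝ U En)
    (u : ℝ → EuclideanSpace ℝ (Fin N))
    (hmem : ∀ t ∈ Set.Ici (0:ℝ), u t ∈ U)
    (hcpt : ∃ Z : Set (EuclideanSpace ℝ (Fin N)), IsCompact Z ∧ Z ⊆ U ∧
      ∀ t ∈ Set.Ici (0:ℝ), u t ∈ Z)
    (hmono : AntitoneOn (fun t => En (u t)) (Set.Ici (0:ℝ)))
    (hflow : ∀ t ∈ Set.Ici (0:ℝ), HasDerivAt u (K (u t) - Kb) t)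
    (ub : EuclideanSpace ℝ (Fin N)) (hub : ub ∈ U) (heq : K ub = Kb) :
    ∃ t : ℕ → ℝ, Tendsto t atTop atTop ∧
      Tendsto (fun n => K (u (t n))) atTop (nhds Kb) ∧
      ∃ φ : ℕ → ℕ, StrictMono φ ∧
        Tendsto (fun n => u (t (φ n))) atTop (nhds ub) := by
  obtain ⟨Z, hZc, hZU, hZ⟩ := hcpt
  -- derivative of the energy along the flow
  have hderiv : ∀ t ∈ Set.Ici (0:ℝ),
      HasDerivAt (fun s => En (u s)) (-‖K (u t) - Kb‖^2) t := by
    intro t ht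
    have h1 := ((hEn (u t) (hmem t ht)).hasFDerivAt).comp_hasDerivAt t (hflow t ht)
    have h2 : ((InnerProductSpace.toDual ℝ (EuclideanSpace ℝ (Fin N)))
        (-(K (u t) - Kb))) (K (u t) - Kb) = -‖K (u t) - Kb‖^2 := by
      rw [InnerProductSpace.toDual_apply_apply, inner_neg_left, real_inner_self_eq_norm_sq]
    rw [h2] at h1
    exact h1
  set a : ℕ → ℝ := fun n => En (u n) with ha
  have hanti : Antitone a := by
    intro m n hmn
    exact hmono (Set.mem_Ici.mpr (by positivity)) (Set.mem_Ici.mpr (by positivity))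
      (by exact_mod_cast hmn)
  have hbdd : BddBelow (Set.range a) := by
    have hEncont : ContinuousOn En Z := fun x hx =>
      ((hEn x (hZU hx)).hasFDerivAt.differentiableAt.continuousAt).continuousWithinAt
    obtain ⟨x0, hx0, hmin⟩ := hZc.exists_isMinOn ⟨u 0, hZ 0 (Set.mem_Ici.mpr le_rfl)⟩ hEncont
    refine ⟨En x0, ?_⟩
    rintro y ⟨n, rfl⟩
    exact hmin (hZ n (Set.mem_Ici.mpr (by positivity)))
  have hconv : Tendsto a atTop (nhds (⨅ n, a n)) := tendsto_atTop_ciInf hanti hbdd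
  have hdiff0 : Tendsto (fun n => a n - a (n+1)) atTop (nhds 0) := by
    have := hconv.sub (hconv.comp (tendsto_add_atTop_nat 1))
    simpa using this
  -- MVT on [n, n+1]
  have hMVT : ∀ n : ℕ, ∃ c ∈ Set.Ioo (n:ℝ) (n+1),
      -‖K (u c) - Kb‖^2 = a (n+1) - a n := by
    intro n
    have hlt : (n:ℝ) < n + 1 := by linarith
    have hcont : ContinuousOn (fun s => En (u s)) (Set.Icc (n:ℝ) (n+1)) := by
      intro x hx
      exact (hderiv x (Set.mem_Ici.mpr (le_trans (by positivity) hx.1))).continuousAt.continuousWithinAt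
    obtain ⟨c, hc, hval⟩ := exists_hasDerivAt_eq_slope (fun s => En (u s))
      (fun s => -‖K (u s) - Kb‖^2) hlt hcont
      (fun x hx => hderiv x (Set.mem_Ici.mpr (le_trans (by positivity) hx.1.le)))
    refine ⟨c, hc, ?_⟩
    have h1 : ((n:ℝ)+1) - n = 1 := by ring
    rw [hval, h1, div_one, ha]
    push_cast
    ring
  choose ξ hξmem hξval using hMVT
  have hξpos : ∀ n, (0:ℝ) ≤ ξ n := fun n => le_trans (by positivity) (hξmem n).1.le
  have hKtend : Tendsto (fun n => K (u (ξ n))) atTop (nhds Kb) := by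
    have hsq : Tendsto (fun n => ‖K (u (ξ n)) - Kb‖^2) atTop (nhds 0) := by
      have heq2 : ∀ n, ‖K (u (ξ n)) - Kb‖^2 = a n - a (n+1) := by
        intro n
        have := hξval n
        linarith
      simpa [heq2] using hdiff0
    have hnorm : Tendsto (fun n => ‖K (u (ξ n)) - Kb‖) atTop (nhds 0) := by
      have h := (Real.continuous_sqrt.tendsto 0).comp hsq
      have heq3 : (fun n => Real.sqrt (‖K (u (ξ n)) - Kb‖^2))
          = fun n => ‖K (u (ξ n)) - Kb‖ := by
        funext n; exact Real.sqrt_sq (norm_nonneg _)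
      simpa [Function.comp_def, heq3, Real.sqrt_zero] using h
    exact tendsto_iff_norm_sub_tendsto_zero.mpr hnorm
  refine ⟨ξ, ?_, hKtend, ?_⟩
  · exact tendsto_atTop_mono (fun n => (hξmem n).1.le) tendsto_natCast_atTop_atTop
  · -- subsequence converging to ub
    have hvZ : ∀ n, u (ξ n) ∈ Z := fun n => hZ (ξ n) (Set.mem_Ici.mpr (hξpos n))
    obtain ⟨x, hxZ, φ, hφ, hφconv⟩ := hZc.tendsto_subseq hvZ
    refine ⟨φ, hφ, ?_⟩
    have hxU : x ∈ U := hZU hxZ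
    have hK1 : Tendsto (fun n => K (u (ξ (φ n)))) atTop (nhds (K x)) :=
      ((hK x hxU).continuousAt.tendsto).comp hφconv
    have hK2 : Tendsto (fun n => K (u (ξ (φ n)))) atTop (nhds Kb) :=
      hKtend.comp hφ.tendsto_atTop
    have hxeq : K x = Kb := tendsto_nhds_unique hK1 hK2
    have hx : x = ub := hKinj hxU hub (by rw [hxeq, heq])
    rw [← hx]
    exact hφconv
end
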